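/- Let (Σ,σ) be a primitive Markov subshift on a countable alphabet and let A : Σ → ℝ be a bounded above, locally Hölder continuous potential with inf A|_{⋃_{i∈F}[i]} > −∞. Define u_A(x) = sup{S_k(A − β_A)(y) : k ≥ 0, y ∈ Σ, σ^k(y) = x}. Then u_A is a well-defined real-valued function satisfying 0 ≤ u_A(x) ≤ max{Var(A) + K₀(sup A − inf A|_{⋃_{i∈F}[i]}), K₀(sup A − β_A)} for all x ∈ Σ, and A + u_A − u_A∘σ ≤ β_A on Σ. -/

import Mathlib

open MeasureTheory Filter Topology Set

/-- Membership in the Markov shift: admissible transitions at every coordinate. -/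
def InShift (M : ℕ → ℕ → Bool) (x : ℕ → ℕ) : Prop := ∀ j, M (x j) (x (j+1)) = true

/-- The one-sided countable Markov shift `Σ` associated to the transition matrix `M`,
as a subtype of `ℕ → ℕ` (with the product topology, which is the topology induced by
the metric `d(x,y) = λ^{min{j : x_j ≠ y_j}}`). -/
abbrev ShiftSpace (M : ℕ → ℕ → Bool) := {x : ℕ → ℕ // InShift M x}

/-- The left shift map `σ`. -/
def shiftMap (M : ℕ → ℕ → Bool) (x : ShiftSpace M) : ShiftSpace M :=
  ⟨fun j => x.1 (j+1), fun j => x.2 (j+1)⟩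

/-- `Agree M k x y` means the points `x, y` coincide on the first `k` coordinates;
for `k ≥ 1` this is exactly `d(x,y) ≤ λ^k` for the metric of the paper. -/
def Agree (M : ℕ → ℕ → Bool) (k : ℕ) (x y : ShiftSpace M) : Prop :=
  ∀ j < k, x.1 j = y.1 j

/-- The sets `B_n` of symbols admitting admissible words of length `n+1` starting at them. -/
def BSet (M : ℕ → ℕ → Bool) : ℕ → Set ℕ
  | 0 => {i | ∃ j, M i j = true}
  | n+1 => {i | ∃ j ∈ BSet M n, M i j = true}

/-- `⋂_{n ≥ 0} B_n`. -/
def BInf (M : ℕ → ℕ → Bool) : Set ℕ := ⋂ n, BSet M n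

/-- `M` is primitive with connecting set `F` and connection length `K₀`: any two symbols
of `⋂ B_n` can be joined by an admissible word of length `K₀` with all letters in `F`. -/
def Primitive (M : ℕ → ℕ → Bool) (F : Set ℕ) (K₀ : ℕ) : Prop :=
  ∀ i ∈ BInf M, ∀ j ∈ BInf M, ∃ p : ℕ → ℕ,
    p 0 = i ∧ p (K₀ + 1) = j ∧ (∀ t, 1 ≤ t → t ≤ K₀ → p t ∈ F) ∧
    (∀ t ≤ K₀, M (p t) (p (t+1)) = true)

/-- `A` is locally Hölder continuous with constant `H`:
`Var_k(A) ≤ H ⬝ λ^k` for every `k ≥ 1`. -/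
def LocHolder (M : ℕ → ℕ → Bool) (lam H : ℝ) (A : ShiftSpace M → ℝ) : Prop :=
  ∀ k : ℕ, 1 ≤ k → ∀ x y : ShiftSpace M, Agree M k x y → A x - A y ≤ H * lam ^ k

/-- `A` is coercive: `sup A|_{[i]} → -∞` as `i → ∞`. -/
def Coercive (M : ℕ → ℕ → Bool) (A : ShiftSpace M → ℝ) : Prop :=
  ∀ C : ℝ, ∃ N : ℕ, ∀ i : ℕ, N ≤ i → ∀ x : ShiftSpace M, x.1 0 = i → A x ≤ C

/-- The union of cylinders `⋃_{i ∈ F} [i]`. -/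
def FCyl (M : ℕ → ℕ → Bool) (F : Set ℕ) : Set (ShiftSpace M) := {x | x.1 0 ∈ F}

/-- `μ` is a `σ`-invariant Borel probability measure. -/
def InvProb (M : ℕ → ℕ → Bool) (μ : Measure (ShiftSpace M)) : Prop :=
  IsProbabilityMeasure μ ∧ μ.map (shiftMap M) = μ

/-- The ergodic maximizing value `β_A = sup {∫ A dμ : μ ∈ M_σ}`. -/
noncomputable def betaA (M : ℕ → ℕ → Bool) (A : ShiftSpace M → ℝ) : ℝ :=
  sSup {r | ∃ μ : Measure (ShiftSpace M), InvProb M μ ∧ Integrable A μ ∧ ∫ x, A x ∂μ = r}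

/-- The compact subshift `Σ_I` on the finite alphabet `{0, …, I}`. -/
def SpaceI (M : ℕ → ℕ → Bool) (I : ℕ) : Set (ShiftSpace M) := {x | ∀ j, x.1 j ≤ I}

/-- `β_A(I) = max {∫ A dμ : μ ∈ M_σ, supp μ ⊆ Σ_I}`. -/
noncomputable def betaAI (M : ℕ → ℕ → Bool) (A : ShiftSpace M → ℝ) (I : ℕ) : ℝ :=
  sSup {r | ∃ μ : Measure (ShiftSpace M), InvProb M μ ∧ μ (SpaceI M I) = 1 ∧
    Integrable A μ ∧ ∫ x, A x ∂μ = r}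

/-- Birkhoff sum `S_k A`. -/
noncomputable def birkhoff (M : ℕ → ℕ → Bool) (A : ShiftSpace M → ℝ) (k : ℕ)
    (x : ShiftSpace M) : ℝ :=
  ∑ j ∈ Finset.range k, A ((shiftMap M)^[j] x)

/-- The `k`-th variation `Var_k(A)`. -/
noncomputable def VarK (M : ℕ → ℕ → Bool) (A : ShiftSpace M → ℝ) (k : ℕ) : ℝ :=
  sSup {r | ∃ x y : ShiftSpace M, Agree M k x y ∧ A x - A y = r}

/-- `Var(A) = ∑_{k ≥ 1} Var_k(A)`. -/
noncomputable def VarSum (M : ℕ → ℕ → Bool) (A : ShiftSpace M → ℝ) : ℝ :=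
  ∑' k : ℕ, VarK M A (k + 1)

/-- `sup A`. -/
noncomputable def supA (M : ℕ → ℕ → Bool) (A : ShiftSpace M → ℝ) : ℝ :=
  sSup (Set.range A)

/-- `inf A|_{⋃_{i ∈ F} [i]}`. -/
noncomputable def infF (M : ℕ → ℕ → Bool) (F : Set ℕ) (A : ShiftSpace M → ℝ) : ℝ :=
  sInf (A '' FCyl M F)

/-- The defining set for `u_A(x)`: all values `S_k(A - β_A)(y)` with `σ^k(y) = x`. -/
noncomputable def uASet (M : ℕ → ℕ → Bool) (A : ShiftSpace M → ℝ) (x : ShiftSpace M) :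
    Set ℝ :=
  {r | ∃ (k : ℕ) (y : ShiftSpace M), (shiftMap M)^[k] y = x ∧
    birkhoff M A k y - k * betaA M A = r}

/-- The candidate minimal sub-action
`u_A(x) = sup {S_k(A - β_A)(y) : k ≥ 0, σ^k(y) = x}`. -/
noncomputable def uA (M : ℕ → ℕ → Bool) (A : ShiftSpace M → ℝ) (x : ShiftSpace M) : ℝ :=
  sSup (uASet M A x)

/-- The non-wandering set `Ω(A, I)` with respect to `A|_{Σ_I}`. -/
def NonWandering (M : ℕ → ℕ → Bool) (A : ShiftSpace M → ℝ) (I : ℕ) :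
    Set (ShiftSpace M) :=
  {x | x ∈ SpaceI M I ∧ ∀ ε : ℝ, 0 < ε → ∀ m : ℕ,
    ∃ y ∈ SpaceI M I, ∃ n : ℕ, 1 ≤ n ∧ Agree M m x y ∧
      Agree M m x ((shiftMap M)^[n] y) ∧
      |birkhoff M A n y - n * betaAI M A I| < ε}

/-!
Let `σ^k y = x` with `k ≥ 1`. Primitivity joins `y_{k-1}` back to `y_0` through `K₀` symbols
of `F`, so the word `y_0 … y_{k-1}` extends to a periodic point `z` of period `k + K₀` that
agrees with `y` on its first `k` coordinates. Bounded distortion gives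
`S_k A(y) ≤ S_k A(z) + Var(A)`; the uniform measure on the orbit of `z` is invariant, so
`S_{k+K₀} A(z) ≤ (k + K₀) β_A`; and the `K₀` closing symbols contribute at least
`K₀ inf A|_F`. With `β_A ≤ sup A` this bounds every element of the set defining `u_A` by
`Var(A) + K₀ (sup A - inf A|_F)`, and `0` belongs to it (`k = 0`). The sub-action inequality
holds because a preimage `y` of `x` under `σ^k` is a preimage of `σ x` under `σ^(k+1)`.
-/

open scoped ENNReal

lemma Finset.sum_range_succ_eq_of_cyclic {β : Type*} [AddCommMonoid β] {f : ℕ → β} {n : ℕ}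
    (h : f n = f 0) : ∑ i ∈ Finset.range n, f (i + 1) = ∑ i ∈ Finset.range n, f i := by
  cases n with
  | zero => rfl
  | succ m => rw [Finset.sum_range_succ, h, ← Finset.sum_range_succ']

lemma apply_succ_mod_of_cyclic {β : Type*} {w : ℕ → β} {n : ℕ} (h : w n = w 0) (j : ℕ) :
    w ((j + 1) % n) = w (j % n + 1) := by
  rcases Nat.eq_zero_or_pos n with rfl | hn
  · simp
  rw [← Nat.mod_add_mod]
  rcases Nat.lt_or_eq_of_le (Nat.mod_lt j hn) with hlt | heq
  · rw [Nat.mod_eq_of_lt hlt]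
  · rw [show j % n + 1 = n from heq, Nat.mod_self, h]

section OrbitMeasure

variable {α : Type*} [MeasurableSpace α]

noncomputable def orbitMeasure (f : α → α) (n : ℕ) (z : α) : Measure α :=
  (n : ℝ≥0∞)⁻¹ • ∑ i ∈ Finset.range n, Measure.dirac (f^[i] z)

lemma isProbabilityMeasure_orbitMeasure (f : α → α) {n : ℕ} (hn : n ≠ 0) (z : α) :
    IsProbabilityMeasure (orbitMeasure f n z) := by
  constructor
  simp only [orbitMeasure, Measure.smul_apply, Measure.coe_finsetSum, Finset.sum_apply,
    measure_univ, Finset.sum_const, Finset.card_range, nsmul_eq_mul, mul_one, smul_eq_mul]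
  exact ENNReal.inv_mul_cancel (by exact_mod_cast hn) (ENNReal.natCast_ne_top n)

lemma map_orbitMeasure {f : α → α} (hf : Measurable f) {n : ℕ} {z : α}
    (hz : Function.IsPeriodicPt f n z) : (orbitMeasure f n z).map f = orbitMeasure f n z := by
  simp only [orbitMeasure, Measure.map_smul, Measure.map_finset_sum hf.aemeasurable,
    Measure.map_dirac' hf, ← Function.iterate_succ_apply' f]
  rw [Finset.sum_range_succ_eq_of_cyclic (f := fun i => Measure.dirac (f^[i] z))]
  simp only [hz.eq, Function.iterate_zero, id]

variable [MeasurableSingletonClass α]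

lemma integrable_orbitMeasure (f : α → α) {n : ℕ} (hn : n ≠ 0) (z : α) (g : α → ℝ) :
    Integrable g (orbitMeasure f n z) := by
  refine Integrable.smul_measure ?_ (ENNReal.inv_ne_top.2 (by exact_mod_cast hn))
  exact integrable_finsetSum_measure.2 fun i _ => integrable_dirac enorm_lt_top

lemma integral_orbitMeasure (f : α → α) (n : ℕ) (z : α) (g : α → ℝ) :
    ∫ x, g x ∂(orbitMeasure f n z) =
      (n : ℝ)⁻¹ * ∑ i ∈ Finset.range n, g (f^[i] z) := by
  rw [orbitMeasure, integral_smul_measure,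
    integral_finsetSum_measure fun i _ => integrable_dirac enorm_lt_top]
  simp only [integral_dirac, ENNReal.toReal_inv, ENNReal.toReal_natCast, smul_eq_mul]

end OrbitMeasure

section ShiftSpace

variable {M : ℕ → ℕ → Bool}

lemma measurable_shiftMap : Measurable (shiftMap M) := by
  apply Measurable.subtype_mk
  exact measurable_pi_lambda _ fun j => (measurable_pi_apply (j + 1)).comp measurable_subtype_coe

lemma shiftMap_iterate_apply (x : ShiftSpace M) (i j : ℕ) :
    ((shiftMap M)^[i] x).1 j = x.1 (j + i) := by
  induction i generalizing x with
  | zero => rfl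
  | succ i ih => rw [Function.iterate_succ_apply, ih]; rfl

lemma mem_BInf (x : ShiftSpace M) (j : ℕ) : x.1 j ∈ BInf M := by
  refine Set.mem_iInter.2 fun n => ?_
  induction n generalizing j with
  | zero => exact ⟨x.1 (j + 1), x.2 j⟩
  | succ n ih => exact ⟨x.1 (j + 1), ih (j + 1), x.2 j⟩

def periodicPoint (n : ℕ) (hn : 0 < n) (w : ℕ → ℕ) (hclosed : w n = w 0)
    (hadm : ∀ t < n, M (w t) (w (t + 1)) = true) : ShiftSpace M :=
  ⟨fun j => w (j % n), fun j => by
    dsimp only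
    rw [apply_succ_mod_of_cyclic hclosed]
    exact hadm _ (Nat.mod_lt j hn)⟩

lemma isPeriodicPt_periodicPoint (n : ℕ) (hn : 0 < n) (w : ℕ → ℕ) (hclosed : w n = w 0)
    (hadm : ∀ t < n, M (w t) (w (t + 1)) = true) :
    Function.IsPeriodicPt (shiftMap M) n (periodicPoint n hn w hclosed hadm) := by
  refine Subtype.ext (funext fun j => ?_)
  rw [shiftMap_iterate_apply]
  exact congrArg w (Nat.add_mod_right j n)

variable {F : Set ℕ} {K₀ : ℕ}

lemma exists_isPeriodicPt_agree (hprim : Primitive M F K₀) (y : ShiftSpace M) {k : ℕ}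
    (hk : 0 < k) :
    ∃ z : ShiftSpace M, Function.IsPeriodicPt (shiftMap M) (k + K₀) z ∧ Agree M k y z ∧
      ∀ s < K₀, (shiftMap M)^[k + s] z ∈ FCyl M F := by
  obtain ⟨p, hp0, hpK, hpF, hpadm⟩ :=
    hprim (y.1 (k - 1)) (mem_BInf y (k - 1)) (y.1 0) (mem_BInf y 0)
  set w : ℕ → ℕ := fun t => if t < k then y.1 t else p (t - (k - 1))
  have hw_head : ∀ t < k, w t = y.1 t := fun t ht => if_pos ht
  have hw_tail : ∀ t, k - 1 ≤ t → w t = p (t - (k - 1)) := by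
    intro t ht
    by_cases htk : t < k
    · obtain rfl : t = k - 1 := by omega
      rw [hw_head _ htk, Nat.sub_self, hp0]
    · exact if_neg htk
  have hclosed : w (k + K₀) = w 0 := by
    rw [hw_tail _ (by omega), hw_head 0 hk, show k + K₀ - (k - 1) = K₀ + 1 by omega, hpK]
  have hadm : ∀ t < k + K₀, M (w t) (w (t + 1)) = true := by
    intro t ht
    by_cases htk : t + 1 < k
    · rw [hw_head t (by omega), hw_head (t + 1) htk]
      exact y.2 t
    · rw [hw_tail t (by omega), hw_tail (t + 1) (by omega),
        show t + 1 - (k - 1) = t - (k - 1) + 1 by omega]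
      exact hpadm _ (by omega)
  refine ⟨periodicPoint (k + K₀) (by omega) w hclosed hadm,
    isPeriodicPt_periodicPoint _ _ w hclosed hadm, fun j hj => ?_, fun s hs => ?_⟩
  · show y.1 j = w (j % (k + K₀))
    rw [Nat.mod_eq_of_lt (by omega), hw_head j hj]
  · show ((shiftMap M)^[k + s] _).1 0 ∈ F
    rw [shiftMap_iterate_apply]
    show w ((0 + (k + s)) % (k + K₀)) ∈ F
    rw [Nat.mod_eq_of_lt (by omega), hw_tail _ (by omega),
      show 0 + (k + s) - (k - 1) = s + 1 by omega]
    exact hpF (s + 1) (by omega) (by omega)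

end ShiftSpace

section Potential

variable {M : ℕ → ℕ → Bool} {A : ShiftSpace M → ℝ}

lemma birkhoff_add (A : ShiftSpace M → ℝ) (k l : ℕ) (x : ShiftSpace M) :
    birkhoff M A (k + l) x =
      birkhoff M A k x + ∑ s ∈ Finset.range l, A ((shiftMap M)^[k + s] x) :=
  Finset.sum_range_add _ k l

section Variation

variable {lam H : ℝ}

lemma sub_le_varK (hhold : LocHolder M lam H A) {k : ℕ} (hk : 1 ≤ k) {x y : ShiftSpace M}
    (hxy : Agree M k x y) : A x - A y ≤ VarK M A k := by
  refine le_csSup ⟨H * lam ^ k, ?_⟩ ⟨x, y, hxy, rfl⟩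
  rintro r ⟨x', y', hxy', rfl⟩
  exact hhold k hk x' y' hxy'

variable [Nonempty (ShiftSpace M)]

lemma varK_nonneg (hhold : LocHolder M lam H A) {k : ℕ} (hk : 1 ≤ k) : 0 ≤ VarK M A k := by
  obtain ⟨x⟩ := ‹Nonempty (ShiftSpace M)›
  simpa using sub_le_varK hhold hk (x := x) (y := x) fun _ _ => rfl

lemma varK_le (hhold : LocHolder M lam H A) {k : ℕ} (hk : 1 ≤ k) :
    VarK M A k ≤ H * lam ^ k := by
  obtain ⟨x⟩ := ‹Nonempty (ShiftSpace M)›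
  refine csSup_le ⟨0, x, x, fun _ _ => rfl, sub_self _⟩ ?_
  rintro r ⟨x', y', hxy', rfl⟩
  exact hhold k hk x' y' hxy'

lemma summable_varK (hlam₀ : 0 < lam) (hlam₁ : lam < 1) (hhold : LocHolder M lam H A) :
    Summable fun m : ℕ => VarK M A (m + 1) := by
  refine .of_nonneg_of_le (fun m => varK_nonneg hhold (by omega)) (fun m => ?_)
    ((summable_geometric_of_lt_one hlam₀.le hlam₁).mul_left (H * lam))
  calc VarK M A (m + 1) ≤ H * lam ^ (m + 1) := varK_le hhold (by omega)
    _ = H * lam * lam ^ m := by ring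

lemma varSum_nonneg (hhold : LocHolder M lam H A) : 0 ≤ VarSum M A :=
  tsum_nonneg fun _ => varK_nonneg hhold (by omega)

lemma birkhoff_sub_le_varSum (hlam₀ : 0 < lam) (hlam₁ : lam < 1) (hhold : LocHolder M lam H A)
    {k : ℕ} {y z : ShiftSpace M} (hyz : Agree M k y z) :
    birkhoff M A k y - birkhoff M A k z ≤ VarSum M A := by
  have hterm : ∀ j ∈ Finset.range k, A ((shiftMap M)^[j] y) - A ((shiftMap M)^[j] z) ≤
      VarK M A (k - 1 - j + 1) := by
    intro j hj
    rw [Finset.mem_range] at hj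
    refine sub_le_varK hhold (by omega) fun m hm => ?_
    rw [shiftMap_iterate_apply, shiftMap_iterate_apply]
    exact hyz _ (by omega)
  calc birkhoff M A k y - birkhoff M A k z
      ≤ ∑ j ∈ Finset.range k, VarK M A (k - 1 - j + 1) := by
        rw [birkhoff, birkhoff, ← Finset.sum_sub_distrib]
        exact Finset.sum_le_sum hterm
    _ = ∑ m ∈ Finset.range k, VarK M A (m + 1) :=
        Finset.sum_range_reflect (fun m => VarK M A (m + 1)) k
    _ ≤ VarSum M A :=
        (summable_varK hlam₀ hlam₁ hhold).sum_le_tsum _ fun _ _ => varK_nonneg hhold (by omega)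

end Variation

lemma integral_le_supA (hbdd : BddAbove (Set.range A)) {μ : Measure (ShiftSpace M)}
    [IsProbabilityMeasure μ] (hint : Integrable A μ) : ∫ x, A x ∂μ ≤ supA M A := by
  simpa using integral_mono hint (integrable_const (supA M A)) fun x => le_csSup hbdd ⟨x, rfl⟩

lemma integral_le_betaA (hbdd : BddAbove (Set.range A)) {μ : Measure (ShiftSpace M)}
    (hμ : InvProb M μ) (hint : Integrable A μ) : ∫ x, A x ∂μ ≤ betaA M A := by
  refine le_csSup ⟨supA M A, ?_⟩ ⟨μ, hμ, hint, rfl⟩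
  rintro r ⟨ν, ⟨hν, -⟩, hintν, rfl⟩
  exact integral_le_supA hbdd hintν

lemma betaA_le_supA (hbdd : BddAbove (Set.range A)) {μ : Measure (ShiftSpace M)}
    (hμ : InvProb M μ) (hint : Integrable A μ) : betaA M A ≤ supA M A := by
  refine csSup_le ⟨_, μ, hμ, hint, rfl⟩ ?_
  rintro r ⟨ν, ⟨hν, -⟩, hintν, rfl⟩
  exact integral_le_supA hbdd hintν

lemma invProb_orbitMeasure {n : ℕ} (hn : n ≠ 0) {z : ShiftSpace M}
    (hz : Function.IsPeriodicPt (shiftMap M) n z) : InvProb M (orbitMeasure (shiftMap M) n z) :=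
  ⟨isProbabilityMeasure_orbitMeasure _ hn z, map_orbitMeasure measurable_shiftMap hz⟩

lemma birkhoff_le_mul_betaA (hbdd : BddAbove (Set.range A)) {n : ℕ} (hn : n ≠ 0)
    {z : ShiftSpace M} (hz : Function.IsPeriodicPt (shiftMap M) n z) :
    birkhoff M A n z ≤ n * betaA M A := by
  have h := integral_le_betaA hbdd (invProb_orbitMeasure hn hz)
    (integrable_orbitMeasure _ hn z A)
  rwa [integral_orbitMeasure, inv_mul_le_iff₀ (by positivity)] at h

section Bound

variable {F : Set ℕ} {K₀ : ℕ} {lam H : ℝ}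

lemma infF_le_supA (hprim : Primitive M F K₀) (hK₀ : K₀ ≠ 0) (hbdd : BddAbove (Set.range A))
    (hbelow : BddBelow (A '' FCyl M F)) (x : ShiftSpace M) : infF M F A ≤ supA M A := by
  obtain ⟨z, -, -, hF⟩ := exists_isPeriodicPt_agree hprim x one_pos
  exact (csInf_le hbelow ⟨_, hF 0 (Nat.pos_of_ne_zero hK₀), rfl⟩).trans
    (le_csSup hbdd ⟨_, rfl⟩)

lemma varSum_add_nonneg (hprim : Primitive M F K₀) (hbdd : BddAbove (Set.range A))
    (hbelow : BddBelow (A '' FCyl M F)) (hhold : LocHolder M lam H A) (x : ShiftSpace M) :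
    0 ≤ VarSum M A + K₀ * (supA M A - infF M F A) := by
  have : Nonempty (ShiftSpace M) := ⟨x⟩
  rcases eq_or_ne K₀ 0 with rfl | hK₀
  · simpa using varSum_nonneg hhold
  · exact add_nonneg (varSum_nonneg hhold)
      (mul_nonneg K₀.cast_nonneg (sub_nonneg.2 (infF_le_supA hprim hK₀ hbdd hbelow x)))

lemma birkhoff_sub_mul_betaA_le (hlam₀ : 0 < lam) (hlam₁ : lam < 1) (hprim : Primitive M F K₀)
    (hbdd : BddAbove (Set.range A)) (hbelow : BddBelow (A '' FCyl M F))
    (hhold : LocHolder M lam H A) (y : ShiftSpace M) {k : ℕ} (hk : 0 < k) :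
    birkhoff M A k y - k * betaA M A ≤ VarSum M A + K₀ * (supA M A - infF M F A) := by
  have : Nonempty (ShiftSpace M) := ⟨y⟩
  obtain ⟨z, hz, hyz, hF⟩ := exists_isPeriodicPt_agree hprim y hk
  have hn : k + K₀ ≠ 0 := by omega
  have hvar := birkhoff_sub_le_varSum hlam₀ hlam₁ hhold hyz
  have hper := birkhoff_le_mul_betaA hbdd hn hz
  have htail : K₀ * infF M F A ≤ ∑ s ∈ Finset.range K₀, A ((shiftMap M)^[k + s] z) := by
    have h := Finset.card_nsmul_le_sum (Finset.range K₀) _ (infF M F A) fun s hs =>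
      csInf_le hbelow ⟨_, hF s (Finset.mem_range.1 hs), rfl⟩
    simpa using h
  have hβ : K₀ * betaA M A ≤ K₀ * supA M A := mul_le_mul_of_nonneg_left
    (betaA_le_supA hbdd (invProb_orbitMeasure hn hz) (integrable_orbitMeasure _ hn z A))
    K₀.cast_nonneg
  rw [birkhoff_add] at hper
  push_cast at hper
  linarith

end Bound

lemma zero_mem_uASet (A : ShiftSpace M → ℝ) (x : ShiftSpace M) : (0 : ℝ) ∈ uASet M A x :=
  ⟨0, x, rfl, by simp [birkhoff]⟩

lemma add_sub_betaA_mem_uASet_shiftMap {x : ShiftSpace M} {r : ℝ} (hr : r ∈ uASet M A x) :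
    r + A x - betaA M A ∈ uASet M A (shiftMap M x) := by
  obtain ⟨k, y, hyx, rfl⟩ := hr
  refine ⟨k + 1, y, by rw [Function.iterate_succ_apply', hyx], ?_⟩
  rw [birkhoff, Finset.sum_range_succ, hyx, ← birkhoff]
  push_cast
  ring

end Potential

theorem uA_well_defined_bounded_subaction_general
    (M : ℕ → ℕ → Bool) (F : Set ℕ) (K₀ : ℕ) (lam H : ℝ)
    (hlam₀ : 0 < lam) (hlam₁ : lam < 1)
    (hprim : Primitive M F K₀)
    (A : ShiftSpace M → ℝ)
    (hbdd : BddAbove (Set.range A))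
    (hbelow : BddBelow (A '' FCyl M F))
    (hhold : LocHolder M lam H A) :
    (∀ x : ShiftSpace M, (uASet M A x).Nonempty ∧ BddAbove (uASet M A x)) ∧
    (∀ x : ShiftSpace M, 0 ≤ uA M A x ∧
      uA M A x ≤ max (VarSum M A + (K₀ : ℝ) * (supA M A - infF M F A))
        ((K₀ : ℝ) * (supA M A - betaA M A))) ∧
    (∀ x : ShiftSpace M, A x + uA M A x - uA M A (shiftMap M x) ≤ betaA M A) := by
  have hub : ∀ x, ∀ r ∈ uASet M A x, r ≤ VarSum M A + K₀ * (supA M A - infF M F A) := by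
    rintro x _ ⟨k, y, -, rfl⟩
    rcases Nat.eq_zero_or_pos k with rfl | hk
    · simpa [birkhoff] using varSum_add_nonneg hprim hbdd hbelow hhold x
    · exact birkhoff_sub_mul_betaA_le hlam₀ hlam₁ hprim hbdd hbelow hhold y hk
  have hbddu : ∀ x, BddAbove (uASet M A x) := fun x => ⟨_, hub x⟩
  refine ⟨fun x => ⟨⟨0, zero_mem_uASet A x⟩, hbddu x⟩,
    fun x => ⟨le_csSup (hbddu x) (zero_mem_uASet A x), ?_⟩, fun x => ?_⟩
  · exact (csSup_le ⟨0, zero_mem_uASet A x⟩ (hub x)).trans (le_max_left _ _)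
  · have hsub : uA M A x ≤ uA M A (shiftMap M x) + betaA M A - A x :=
      csSup_le ⟨0, zero_mem_uASet A x⟩ fun r hr => by
        have h : r + A x - betaA M A ≤ uA M A (shiftMap M x) :=
          le_csSup (hbddu _) (add_sub_betaA_mem_uASet_shiftMap hr)
        linarith
    linarith

/-- the function `u_A(x) = sup {S_k(A - β_A)(y) : k ≥ 0, σ^k(y) = x}` is
well defined (the defining set is nonempty and bounded above), satisfies
`0 ≤ u_A ≤ max{Var(A) + K₀(sup A - inf A|_F), K₀(sup A - β_A)}`, and is a sub-action. -/
theorem uA_well_defined_bounded_subaction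
    (M : ℕ → ℕ → Bool) (F : Set ℕ) (K₀ : ℕ) (lam H : ℝ)
    (hlam₀ : 0 < lam) (hlam₁ : lam < 1) (hH : 0 < H)
    (hprim : Primitive M F K₀)
    (A : ShiftSpace M → ℝ)
    (hbdd : BddAbove (Set.range A))
    (hbelow : BddBelow (A '' FCyl M F))
    (hhold : LocHolder M lam H A) :
    (∀ x : ShiftSpace M, (uASet M A x).Nonempty ∧ BddAbove (uASet M A x)) ∧
    (∀ x : ShiftSpace M, 0 ≤ uA M A x ∧
      uA M A x ≤ max (VarSum M A + (K₀ : ℝ) * (supA M A - infF M F A))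
        ((K₀ : ℝ) * (supA M A - betaA M A))) ∧
    (∀ x : ShiftSpace M, A x + uA M A x - uA M A (shiftMap M x) ≤ betaA M A) :=
  uA_well_defined_bounded_subaction_general M F K₀ lam H hlam₀ hlam₁ hprim A hbdd hbelow hhold
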